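/- arXiv:2308.15250 — 8 statements merged into one kernel-verified Lean document; each statement's English description precedes it below -/
import Mathlib

section
/- Let a = γ‖u‖² + σ² and b = γ‖v‖² + σ² where ‖u - v‖² ≤ η²‖v‖² + R_rel² and ‖u - v‖² ≤ η²‖u‖² + R_rel². If σ² ≥ γ(1 + η⁻¹)/(2η + η²) · R_rel², then (1+η)⁻² ≤ a/b ≤ (1+η)². -/
set_option maxHeartbeats 1000000

theorem noise_scale_ratio_bound
    {d : ℕ} (u v : EuclideanSpace ℝ (Fin d))
    (γ σ η Rrel : ℝ) (hγ : 0 < γ) (hσ : 0 < σ) (hη : 0 < η) (hRrel : 0 ≤ Rrel)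
    (h1 : ‖u - v‖ ^ 2 ≤ η ^ 2 * ‖v‖ ^ 2 + Rrel ^ 2)
    (h2 : ‖u - v‖ ^ 2 ≤ η ^ 2 * ‖u‖ ^ 2 + Rrel ^ 2)
    (hσ2 : σ ^ 2 ≥ γ * (1 + η⁻¹) / (2 * η + η ^ 2) * Rrel ^ 2) :
    (1 + η)⁻¹ ^ 2 ≤ (γ * ‖u‖ ^ 2 + σ ^ 2) / (γ * ‖v‖ ^ 2 + σ ^ 2) ∧
      (γ * ‖u‖ ^ 2 + σ ^ 2) / (γ * ‖v‖ ^ 2 + σ ^ 2) ≤ (1 + η) ^ 2 := by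
  have hη' : η ≠ 0 := hη.ne'
  have hinvpos : (0:ℝ) < η⁻¹ := inv_pos.mpr hη
  have hden : (0:ℝ) < 2 * η + η ^ 2 := by positivity
  have hσ2' : γ * (1 + η⁻¹) * Rrel ^ 2 ≤ (2 * η + η ^ 2) * σ ^ 2 := by
    calc γ * (1 + η⁻¹) * Rrel ^ 2
        = γ * (1 + η⁻¹) / (2 * η + η ^ 2) * Rrel ^ 2 * (2 * η + η ^ 2) := by
          field_simp
      _ ≤ σ ^ 2 * (2 * η + η ^ 2) := by
          exact mul_le_mul_of_nonneg_right hσ2 hden.le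
      _ = (2 * η + η ^ 2) * σ ^ 2 := by ring
  have young : ∀ x y : ℝ, 0 ≤ x → 0 ≤ y →
      (x + y) ^ 2 ≤ (1 + η) * x ^ 2 + (1 + η⁻¹) * y ^ 2 := by
    intro x y hx hy
    nlinarith [sq_nonneg (η * x - y), sq_nonneg x, sq_nonneg y,
      mul_pos hη hinvpos, mul_inv_cancel₀ hη']
  have hu_le : ‖u‖ ^ 2 ≤ (1 + η) * ‖v‖ ^ 2 + (1 + η⁻¹) * ‖u - v‖ ^ 2 := by
    have hle : ‖u‖ ≤ ‖v‖ + ‖u - v‖ := by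
      calc ‖u‖ = ‖v + (u - v)‖ := by congr 1; abel
        _ ≤ ‖v‖ + ‖u - v‖ := norm_add_le _ _
    calc ‖u‖ ^ 2 ≤ (‖v‖ + ‖u - v‖) ^ 2 :=
          pow_le_pow_left₀ (norm_nonneg _) hle 2
      _ ≤ (1 + η) * ‖v‖ ^ 2 + (1 + η⁻¹) * ‖u - v‖ ^ 2 :=
          young _ _ (norm_nonneg _) (norm_nonneg _)
  have hv_le : ‖v‖ ^ 2 ≤ (1 + η) * ‖u‖ ^ 2 + (1 + η⁻¹) * ‖u - v‖ ^ 2 := by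
    have hle : ‖v‖ ≤ ‖u‖ + ‖u - v‖ := by
      calc ‖v‖ = ‖u + (v - u)‖ := by congr 1; abel
        _ ≤ ‖u‖ + ‖v - u‖ := norm_add_le _ _
        _ = ‖u‖ + ‖u - v‖ := by rw [norm_sub_rev]
    calc ‖v‖ ^ 2 ≤ (‖u‖ + ‖u - v‖) ^ 2 :=
          pow_le_pow_left₀ (norm_nonneg _) hle 2
      _ ≤ (1 + η) * ‖u‖ ^ 2 + (1 + η⁻¹) * ‖u - v‖ ^ 2 :=
          young _ _ (norm_nonneg _) (norm_nonneg _)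
  set A := ‖u‖ ^ 2 with hA
  set B := ‖v‖ ^ 2 with hB
  set C := ‖u - v‖ ^ 2 with hC
  have hCpos : 0 ≤ C := sq_nonneg _
  have hApos : 0 ≤ A := sq_nonneg _
  have hBpos : 0 ≤ B := sq_nonneg _
  have e1 : (1 + η⁻¹) * η ^ 2 = η ^ 2 + η := by field_simp
  have hnonneg : (0:ℝ) ≤ 1 + η⁻¹ := by positivity
  have t1 : (1 + η⁻¹) * C ≤ (η ^ 2 + η) * B + (1 + η⁻¹) * Rrel ^ 2 := by
    have := mul_le_mul_of_nonneg_left h1 hnonneg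
    nlinarith [e1, this]
  have t2 : (1 + η⁻¹) * C ≤ (η ^ 2 + η) * A + (1 + η⁻¹) * Rrel ^ 2 := by
    have := mul_le_mul_of_nonneg_left h2 hnonneg
    nlinarith [e1, this]
  have hu2 : A ≤ (1 + η) ^ 2 * B + (1 + η⁻¹) * Rrel ^ 2 := by nlinarith [hu_le, t1]
  have hv2 : B ≤ (1 + η) ^ 2 * A + (1 + η⁻¹) * Rrel ^ 2 := by nlinarith [hv_le, t2]
  have key1 : γ * A + σ ^ 2 ≤ (1 + η) ^ 2 * (γ * B + σ ^ 2) := by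
    nlinarith [mul_le_mul_of_nonneg_left hu2 hγ.le, hσ2']
  have key2 : γ * B + σ ^ 2 ≤ (1 + η) ^ 2 * (γ * A + σ ^ 2) := by
    nlinarith [mul_le_mul_of_nonneg_left hv2 hγ.le, hσ2']
  have hb : (0:ℝ) < γ * B + σ ^ 2 := by positivity
  have h1η : (0:ℝ) < (1 + η) ^ 2 := by positivity
  constructor
  · rw [inv_pow, inv_eq_one_div, div_le_div_iff₀ h1η hb]
    nlinarith [key2]
  · rw [div_le_iff₀ hb]
    linarith [key1]
end

section
/- For one-dimensional Gaussians P = N(μ₁, σ₁²) and Q = N(μ₂, σ₂²) with α > 1 and ασ₂² + (1-α)σ₁² > 0, the Rényi divergence of order α satisfies D_α(P‖Q) = α(μ₁-μ₂)²/(2(ασ₂² + (1-α)σ₁²)) + (1/(α-1)) log(σ₁^{1-α} σ₂^α / √(ασ₂² + (1-α)σ₁²)). -/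
/-!
With `w = α σ₂² + (1 - α) σ₁²`, the exponent of `P ^ α * Q ^ (1 - α)` is a quadratic in `x` with
leading coefficient `-w / (2 σ₁² σ₂²)`; completing the square turns the integrand into a constant
multiple of a Gaussian, so the Gaussian integral evaluates it in closed form. The mean term of the
divergence comes from the constant left over by completing the square, the logarithmic term from
the normalising constants.
-/

open Real MeasureTheory

noncomputable def gaussianDensity (μ σ x : ℝ) : ℝ :=
  (σ * √(2 * π))⁻¹ * exp (-(x - μ) ^ 2 / (2 * σ ^ 2))

lemma inv_mul_exp_rpow {c : ℝ} (hc : 0 < c) (t a : ℝ) :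
    (c⁻¹ * exp t) ^ a = exp (a * (t - log c)) := by
  rw [← exp_log hc, ← exp_neg, ← exp_add, ← exp_mul, log_exp]
  congr 1
  ring

lemma weighted_sq_div_add_sq_div {a v₁ v₂ w : ℝ} (hv₁ : v₁ ≠ 0) (hv₂ : v₂ ≠ 0) (hw : w ≠ 0)
    (hw_def : w = a * v₂ + (1 - a) * v₁) (μ₁ μ₂ x : ℝ) :
    a * ((x - μ₁) ^ 2 / v₁) + (1 - a) * ((x - μ₂) ^ 2 / v₂) =
      w / (v₁ * v₂) * (x - (a * v₂ * μ₁ + (1 - a) * v₁ * μ₂) / w) ^ 2 +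
        a * (1 - a) * (μ₁ - μ₂) ^ 2 / w := by
  field_simp
  rw [hw_def]
  ring

lemma integral_exp_sub_mul_sub_sq (K b m : ℝ) :
    ∫ x, exp (K - b * (x - m) ^ 2) = exp K * √(π / b) := by
  simp_rw [sub_eq_add_neg K, exp_add, ← neg_mul]
  rw [integral_const_mul, integral_sub_right_eq_self (fun x => exp (-b * x ^ 2)) m,
    integral_gaussian]

theorem integral_gaussianDensity_rpow_mul_rpow (μ₁ μ₂ σ₁ σ₂ a : ℝ) (hσ₁ : 0 < σ₁)
    (hσ₂ : 0 < σ₂) (hw : 0 < a * σ₂ ^ 2 + (1 - a) * σ₁ ^ 2) :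
    ∫ x, gaussianDensity μ₁ σ₁ x ^ a * gaussianDensity μ₂ σ₂ x ^ (1 - a) =
      exp (a * (a - 1) * (μ₁ - μ₂) ^ 2 / (2 * (a * σ₂ ^ 2 + (1 - a) * σ₁ ^ 2))) *
        (σ₁ ^ (1 - a) * σ₂ ^ a / √(a * σ₂ ^ 2 + (1 - a) * σ₁ ^ 2)) := by
  set w := a * σ₂ ^ 2 + (1 - a) * σ₁ ^ 2 with hw_def
  clear_value w
  set G := a * (a - 1) * (μ₁ - μ₂) ^ 2 / (2 * w)
  set L₁ := log (σ₁ * √(2 * π))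
  set L₂ := log (σ₂ * √(2 * π))
  set m := (a * σ₂ ^ 2 * μ₁ + (1 - a) * σ₁ ^ 2 * μ₂) / w
  have hsqrt : 0 < √(2 * π) := by positivity
  have hpt : ∀ x, gaussianDensity μ₁ σ₁ x ^ a * gaussianDensity μ₂ σ₂ x ^ (1 - a) =
      exp (G - a * L₁ - (1 - a) * L₂ - w / (2 * σ₁ ^ 2 * σ₂ ^ 2) * (x - m) ^ 2) := by
    intro x
    rw [gaussianDensity, gaussianDensity, inv_mul_exp_rpow (by positivity),
      inv_mul_exp_rpow (by positivity), ← exp_add]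
    congr 1
    linear_combination (-1 / 2 : ℝ) * weighted_sq_div_add_sq_div (by positivity)
      (by positivity) hw.ne' hw_def μ₁ μ₂ x
  have hlog : log (σ₁ ^ (1 - a) * σ₂ ^ a / √w) =
      log (π / (w / (2 * σ₁ ^ 2 * σ₂ ^ 2))) / 2 - a * L₁ - (1 - a) * L₂ := by
    have hπ : 0 < π := pi_pos
    simp only [L₁, L₂]
    rw [log_div (by positivity) (by positivity), log_mul (by positivity) (by positivity),
      log_rpow hσ₁, log_rpow hσ₂, log_sqrt hw.le, log_div hπ.ne' (by positivity),
      log_div hw.ne' (by positivity), log_mul (by positivity) (by positivity),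
      log_mul (by positivity) (by positivity), log_mul hσ₁.ne' hsqrt.ne',
      log_mul hσ₂.ne' hsqrt.ne', log_sqrt (by positivity), log_mul (by norm_num) hπ.ne',
      log_pow, log_pow]
    push_cast
    ring
  simp_rw [hpt, integral_exp_sub_mul_sub_sq]
  rw [← exp_log (show 0 < σ₁ ^ (1 - a) * σ₂ ^ a / √w by positivity), ← exp_add,
    ← exp_log (show 0 < √(π / (w / (2 * σ₁ ^ 2 * σ₂ ^ 2))) by positivity), ← exp_add,
    log_sqrt (by positivity), hlog]
  congr 1
  ring

/-- Rényi divergence of order `α` between two one-dimensional Gaussians,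
defined via `(1/(α-1)) log ∫ P(x)^α Q(x)^(1-α) dx`. -/
theorem renyi_divergence_gaussians_1d
    (μ₁ μ₂ σ₁ σ₂ α : ℝ) (hσ₁ : 0 < σ₁) (hσ₂ : 0 < σ₂) (hα : 1 < α)
    (hpos : 0 < α * σ₂ ^ 2 + (1 - α) * σ₁ ^ 2) :
    let P : ℝ → ℝ := fun x =>
      (σ₁ * Real.sqrt (2 * Real.pi))⁻¹ * Real.exp (-(x - μ₁) ^ 2 / (2 * σ₁ ^ 2))
    let Q : ℝ → ℝ := fun x =>
      (σ₂ * Real.sqrt (2 * Real.pi))⁻¹ * Real.exp (-(x - μ₂) ^ 2 / (2 * σ₂ ^ 2))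
    (α - 1)⁻¹ * Real.log (∫ x : ℝ, P x ^ α * Q x ^ (1 - α)) =
      α * (μ₁ - μ₂) ^ 2 / (2 * (α * σ₂ ^ 2 + (1 - α) * σ₁ ^ 2)) +
        1 / (α - 1) *
          Real.log (σ₁ ^ (1 - α) * σ₂ ^ α /
            Real.sqrt (α * σ₂ ^ 2 + (1 - α) * σ₁ ^ 2)) := by
  intro P Q
  have hα₁ : α - 1 ≠ 0 := (sub_pos.mpr hα).ne'
  change (α - 1)⁻¹ *
    log (∫ x, gaussianDensity μ₁ σ₁ x ^ α * gaussianDensity μ₂ σ₂ x ^ (1 - α)) = _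
  rw [integral_gaussianDensity_rpow_mul_rpow μ₁ μ₂ σ₁ σ₂ α hσ₁ hσ₂ hpos,
    log_mul (exp_pos _).ne' (by positivity), log_exp]
  field_simp
end

section
/- Let η > 0, γ > 0, α > 1 with (α-1)·η(2+η) ≤ 1 - ρ for some ρ ∈ (0,1]. Suppose ‖u - v‖² ≤ η²‖v‖² + R² and σ² ≥ (γ/η²)(1 - (α-1)η)R². Then α(γ‖v‖² + σ²) + (1-α)(γ‖u‖² + σ²) ≥ (γρ/η²)‖u - v‖². -/
lemma denom_aux (a b c η γ α ρ R σ : ℝ) (hη : 0 < η) (hγ : 0 < γ) (hα : 1 < α)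
    (hρ0 : 0 < ρ) (hρ1 : ρ ≤ 1)
    (hαη : (α - 1) * (η * (2 + η)) ≤ 1 - ρ)
    (ha : 0 ≤ a) (hb : 0 ≤ b) (hc : 0 ≤ c) (htri : c ≤ a + b)
    (hsens : a ^ 2 ≤ η ^ 2 * b ^ 2 + R ^ 2)
    (hσ : σ ^ 2 ≥ γ / η ^ 2 * (1 - (α - 1) * η) * R ^ 2) :
    γ * ρ / η ^ 2 * a ^ 2 ≤
      α * (γ * b ^ 2 + σ ^ 2) + (1 - α) * (γ * c ^ 2 + σ ^ 2) := by
  have hη2 : (0:ℝ) < η ^ 2 := by positivity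
  have hα1 : (0:ℝ) ≤ α - 1 := by linarith
  have h1 : (0:ℝ) ≤ 1 - (α - 1) * η := by nlinarith
  have hc2 : (0:ℝ) ≤ γ * (α - 1) * η ^ 2 * ((a + b) ^ 2 - c ^ 2) := by
    have : c ^ 2 ≤ (a + b) ^ 2 := by nlinarith
    have h' : (0:ℝ) ≤ γ * (α - 1) * η ^ 2 := by positivity
    nlinarith
  have hyoung : (0:ℝ) ≤ γ * (α - 1) * η * (η ^ 2 * b ^ 2 + a ^ 2 - 2 * a * b * η) := by
    have h' : (0:ℝ) ≤ γ * (α - 1) * η := by positivity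
    nlinarith [sq_nonneg (η * b - a)]
  have hsens' : (0:ℝ) ≤ γ * (1 - (α - 1) * η) * (η ^ 2 * b ^ 2 + R ^ 2 - a ^ 2) := by
    have h' : (0:ℝ) ≤ γ * (1 - (α - 1) * η) := by positivity
    nlinarith
  have hv : (0:ℝ) ≤ γ * a ^ 2 * ((1 - ρ) - (α - 1) * (η * (2 + η))) := by
    have h' : (0:ℝ) ≤ γ * a ^ 2 := by positivity
    nlinarith
  rw [div_mul_eq_mul_div, div_le_iff₀ hη2]
  rw [ge_iff_le, div_mul_eq_mul_div, div_mul_eq_mul_div, div_le_iff₀ hη2] at hσ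
  linarith [hc2, hyoung, hsens', hv, hσ]

theorem denominator_lower_bound
    {d : ℕ} (u v : EuclideanSpace ℝ (Fin d))
    (η γ α ρ R σ : ℝ) (hη : 0 < η) (hγ : 0 < γ) (hα : 1 < α)
    (hρ0 : 0 < ρ) (hρ1 : ρ ≤ 1)
    (hαη : (α - 1) * (η * (2 + η)) ≤ 1 - ρ)
    (hR : 0 ≤ R)
    (hsens : ‖u - v‖ ^ 2 ≤ η ^ 2 * ‖v‖ ^ 2 + R ^ 2)
    (hσ : σ ^ 2 ≥ γ / η ^ 2 * (1 - (α - 1) * η) * R ^ 2) :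
    γ * ρ / η ^ 2 * ‖u - v‖ ^ 2 ≤
      α * (γ * ‖v‖ ^ 2 + σ ^ 2) + (1 - α) * (γ * ‖u‖ ^ 2 + σ ^ 2) := by
  have htri : ‖u‖ ≤ ‖u - v‖ + ‖v‖ := by
    simpa using norm_add_le (u - v) v
  exact denom_aux ‖u - v‖ ‖v‖ ‖u‖ η γ α ρ R σ hη hγ hα hρ0 hρ1 hαη
    (norm_nonneg _) (norm_nonneg _) (norm_nonneg _) htri hsens hσ
end

section
/- For α > 1 and r > 0 with 1 + α(r−1) > 0, the quantity g(r) = (α−1)/2 · log(r) − (1/2)·log((1 + (r−1)α)/r) satisfies g(r) ≤ α(α−1)(r−1)²/(2(1 + α(r−1))). -/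
theorem log_term_bound (α r : ℝ) (hα : 1 < α) (hr : 0 < r)
    (hpos : 0 < 1 + α * (r - 1)) :
    (α - 1) / 2 * Real.log r - 1 / 2 * Real.log ((1 + (r - 1) * α) / r) ≤
      α * (α - 1) * (r - 1) ^ 2 / (2 * (1 + α * (r - 1))) := by
  have hA : (0:ℝ) < 1 + (r - 1) * α := by nlinarith
  have hB : (0:ℝ) < (1 + (r - 1) * α) / r := div_pos hA hr
  have h1 : Real.log r ≤ r - 1 := Real.log_le_sub_one_of_pos hr
  have h2 : 1 - r / (1 + (r - 1) * α) ≤ Real.log ((1 + (r - 1) * α) / r) := by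
    have h3 : Real.log (r / (1 + (r - 1) * α)) ≤ r / (1 + (r - 1) * α) - 1 :=
      Real.log_le_sub_one_of_pos (div_pos hr hA)
    have h4 : Real.log ((1 + (r - 1) * α) / r) = - Real.log (r / (1 + (r - 1) * α)) := by
      rw [← Real.log_inv, inv_div]
    linarith
  have hmul : (α - 1) / 2 * Real.log r ≤ (α - 1) / 2 * (r - 1) := by
    apply mul_le_mul_of_nonneg_left h1
    linarith
  have key : (α - 1) / 2 * (r - 1) - 1 / 2 * (1 - r / (1 + (r - 1) * α)) =
      α * (α - 1) * (r - 1) ^ 2 / (2 * (1 + α * (r - 1))) := by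
    field_simp
    ring
  nlinarith [h2, hmul, key]
end

section
/- For quadratic objectives with gradients of the form ∇f(θ) = Aθ − b and ∇f'(θ) = A'θ − b', where A − A' = (A₀ − A₀')/n and b − b' = (b₀ − b₀')/n (the difference supported on one record), we have n²‖∇f(θ) − ∇f'(θ)‖² ≤ 3(‖A₀A⁻¹‖² + ‖A₀'A⁻¹‖²)‖∇f(θ)‖² + 3‖(A₀ − A₀')A⁻¹b − b₀ + b₀'‖², where ‖·‖ on matrices is the operator norm. -/
open scoped RealInnerProductSpace

set_option maxHeartbeats 1000000 in
/-- Relative sensitivity decomposition for gradients of quadratic objectives: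
`n²‖∇f(θ) - ∇f'(θ)‖² ≤ 3(‖A₀A⁻¹‖² + ‖A₀'A⁻¹‖²)‖∇f(θ)‖² + 3‖(A₀ - A₀')A⁻¹b - b₀ + b₀'‖²`,
where gradients are `∇f(θ) = Aθ - b`, `∇f'(θ) = A'θ - b'`, and the difference is
supported on one record: `A - A' = (1/n)(A₀ - A₀')`, `b - b' = (1/n)(b₀ - b₀')`. -/
theorem quadratic_gradient_relative_decomposition
    {d : ℕ} (n : ℕ) (hn : 0 < n)
    (A A' A₀ A₀' : EuclideanSpace ℝ (Fin d) →L[ℝ] EuclideanSpace ℝ (Fin d))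
    (Ainv : EuclideanSpace ℝ (Fin d) →L[ℝ] EuclideanSpace ℝ (Fin d))
    (b b' b₀ b₀' : EuclideanSpace ℝ (Fin d))
    (hAinv₁ : A.comp Ainv = ContinuousLinearMap.id ℝ _)
    (hAinv₂ : Ainv.comp A = ContinuousLinearMap.id ℝ _)
    (hA : A - A' = ((n : ℝ)⁻¹) • (A₀ - A₀'))
    (hb : b - b' = ((n : ℝ)⁻¹) • (b₀ - b₀')) :
    ∀ θ : EuclideanSpace ℝ (Fin d),
      (n : ℝ) ^ 2 * ‖(A θ - b) - (A' θ - b')‖ ^ 2 ≤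
        3 * (‖A₀.comp Ainv‖ ^ 2 + ‖A₀'.comp Ainv‖ ^ 2) * ‖A θ - b‖ ^ 2 +
          3 * ‖(A₀ - A₀') (Ainv b) - b₀ + b₀'‖ ^ 2 := by
  intro θ
  have hn' : (n : ℝ) ≠ 0 := Nat.cast_ne_zero.mpr hn.ne'
  set g := A θ - b with hg
  set z := (A₀ - A₀') (Ainv b) - b₀ + b₀' with hz
  set x := (A₀.comp Ainv) g with hx
  set y := (A₀'.comp Ainv) g with hy
  -- the vector v
  have hinvA : ∀ w, Ainv (A w) = w := fun w => by
    have := congrArg (fun f => f w) hAinv₂; simpa using this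
  have hdiff : (A θ - b) - (A' θ - b') = ((n : ℝ)⁻¹) • ((A₀ - A₀') θ - (b₀ - b₀')) := by
    have h1 : A θ - A' θ = ((n : ℝ)⁻¹) • ((A₀ - A₀') θ) := by
      have := congrArg (fun f => f θ) hA
      simpa [ContinuousLinearMap.sub_apply] using this
    rw [smul_sub, ← h1, ← hb]
    abel
  have hv : (A₀ - A₀') θ - (b₀ - b₀') = x - y + z := by
    have hθ : θ = Ainv g + Ainv b := by
      rw [hg, map_sub, hinvA]; abel
    rw [hθ]
    simp only [hx, hy, hz, ContinuousLinearMap.comp_apply, map_add,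
      ContinuousLinearMap.sub_apply]
    abel
  have hnorm : (n : ℝ) * ‖(A θ - b) - (A' θ - b')‖ = ‖x - y + z‖ := by
    rw [hdiff, ← hv, norm_smul]
    simp [abs_of_pos (show (0:ℝ) < n by positivity)]
    field_simp
  have key : (n : ℝ) ^ 2 * ‖(A θ - b) - (A' θ - b')‖ ^ 2 = ‖x - y + z‖ ^ 2 := by
    rw [← hnorm]; ring
  rw [key]
  have h3 : ‖x - y + z‖ ≤ ‖x‖ + ‖y‖ + ‖z‖ := by
    calc ‖x - y + z‖ ≤ ‖x - y‖ + ‖z‖ := norm_add_le _ _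
      _ ≤ ‖x‖ + ‖y‖ + ‖z‖ := by gcongr; exact norm_sub_le _ _
  have hxb : ‖x‖ ≤ ‖A₀.comp Ainv‖ * ‖g‖ := (A₀.comp Ainv).le_opNorm g
  have hyb : ‖y‖ ≤ ‖A₀'.comp Ainv‖ * ‖g‖ := (A₀'.comp Ainv).le_opNorm g
  have hsq : ‖x - y + z‖ ^ 2 ≤ 3 * (‖x‖ ^ 2 + ‖y‖ ^ 2 + ‖z‖ ^ 2) := by
    nlinarith [norm_nonneg x, norm_nonneg y, norm_nonneg z, norm_nonneg (x - y + z), sq_nonneg (‖x‖ - ‖y‖), sq_nonneg (‖x‖ - ‖z‖), sq_nonneg (‖y‖ - ‖z‖)]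
  have hgn : (0:ℝ) ≤ ‖g‖ := norm_nonneg g
  nlinarith [sq_nonneg (‖x‖), sq_nonneg (‖y‖), norm_nonneg x, norm_nonneg y,
    mul_self_nonneg (‖A₀.comp Ainv‖ * ‖g‖), sq_nonneg ‖g‖,
    sq_le_sq' (by linarith [norm_nonneg x] : -(‖A₀.comp Ainv‖ * ‖g‖) ≤ ‖x‖) hxb,
    sq_le_sq' (by linarith [norm_nonneg y] : -(‖A₀'.comp Ainv‖ * ‖g‖) ≤ ‖y‖) hyb]
end

section
/- Let Σ be symmetric positive definite in ℝ^{d×d} and R_c > 0. Define the clipping map x ↦ x · R_c/max(R_c, (xᵀΣ⁻¹x)^{1/2}) and let X ~ N(0, Σ). Then E[clip(X)·clip(X)ᵀ] = ρ̄ Σ, where ρ̄ = (1/(d(2π)^{d/2})) ∫_{ℝ^d} min(‖u‖², R_c²) e^{-‖u‖²/2} du, and 0 < ρ̄ ≤ 1. -/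
/-!
Write `S = Bᵀ B`. The substitution `x = Bᵀ y` turns `xᵀ S⁻¹ x` into `‖y‖²` and contributes the
Jacobian `|det B| = √(det S)`, which cancels against the normalisation of the density; the
integrand becomes a radial function `f ‖y‖` times `(Bᵀ y)ᵢ (Bᵀ y)ⱼ`. For a radial weight,
reflecting one coordinate kills the mixed moments `∫ f ‖y‖ yₖ yₗ` and swapping two coordinates
shows that the `d` diagonal moments agree, so each is `1/d` of `∫ f ‖y‖ ‖y‖²`. Hence the
second-moment matrix is `(Bᵀ B)ᵢⱼ = Sᵢⱼ` times a scalar, and `(c / max c r)² r² = min (r², c²)`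
identifies that scalar with `ρ̄`. Finally `0 < ρ̄ ≤ 1` compares `min (‖u‖², R_c²)` with `‖u‖²`,
whose Gaussian integral is `d (2π)^{d/2}` by Fubini.
-/

open MeasureTheory Real
open scoped Matrix

lemma integral_exp_neg_sq_div_two : ∫ x : ℝ, exp (-x ^ 2 / 2) = √(2 * π) := by
  convert integral_gaussian (1 / 2) using 1
  · congr with x
    ring_nf
  · congr 1
    field_simp

open ProbabilityTheory in
lemma integral_sq_mul_exp_neg_sq_div_two : ∫ x : ℝ, x ^ 2 * exp (-x ^ 2 / 2) = √(2 * π) := by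
  have hvar : ∫ x, x ^ 2 ∂gaussianReal 0 1 = 1 := by
    simpa [variance_of_integral_eq_zero measurable_id.aemeasurable integral_id_gaussianReal]
      using variance_id_gaussianReal (μ := 0) (v := 1)
  simp only [integral_gaussianReal_eq_integral_smul one_ne_zero, gaussianPDFReal, smul_eq_mul,
    NNReal.coe_one, mul_one, sub_zero, mul_assoc, integral_const_mul, inv_mul_eq_one₀ (show √(2 * π) ≠ 0 by positivity)] at hvar
  simp_rw [hvar, mul_comm]

lemma integral_eq_abs_det_smul_integral_comp {E F : Type*} [NormedAddCommGroup E]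
    [NormedSpace ℝ E] [MeasurableSpace E] [BorelSpace E] [FiniteDimensional ℝ E]
    [NormedAddCommGroup F] [NormedSpace ℝ F] (μ : Measure E) [μ.IsAddHaarMeasure]
    {f : E →ₗ[ℝ] E} (hf : LinearMap.det f ≠ 0) (g : E → F) :
    ∫ x, g x ∂μ = |LinearMap.det f| • ∫ x, g (f x) ∂μ := by
  have hf_emb : MeasurableEmbedding f :=
    (f.equivOfDetNeZero hf).toContinuousLinearEquiv.toHomeomorph.measurableEmbedding
  rw [← hf_emb.integral_map, Measure.map_linearMap_addHaar_eq_smul_addHaar μ hf,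
    integral_smul_measure, ENNReal.toReal_ofReal (abs_nonneg _), smul_smul, abs_inv,
    mul_inv_cancel₀ (abs_ne_zero.mpr hf), one_smul]

lemma Matrix.PosDef.exists_isUnit_det_transpose_mul_self_eq {ι : Type*} [Fintype ι]
    [DecidableEq ι] {S : Matrix ι ι ℝ} (hS : S.PosDef) :
    ∃ B : Matrix ι ι ℝ, IsUnit B.det ∧ Bᵀ * B = S := by
  open scoped MatrixOrder in
  obtain ⟨B, rfl⟩ := CStarAlgebra.nonneg_iff_eq_star_mul_self.mp hS.posSemidef.nonneg
  refine ⟨B, isUnit_iff_ne_zero.mpr fun h => ?_, rfl⟩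
  simpa [h] using hS.det_pos

lemma Matrix.transpose_mulVec_dotProduct_inv_mulVec {ι : Type*} [Fintype ι] [DecidableEq ι]
    {B : Matrix ι ι ℝ} (hB : IsUnit B.det) (y : ι → ℝ) :
    Bᵀ *ᵥ y ⬝ᵥ (Bᵀ * B)⁻¹ *ᵥ (Bᵀ *ᵥ y) = y ⬝ᵥ y := by
  have hBt : IsUnit Bᵀ.det := by rwa [Matrix.det_transpose]
  rw [Matrix.mulVec_mulVec, Matrix.mulVec_transpose, ← Matrix.dotProduct_mulVec,
    Matrix.mulVec_mulVec, Matrix.mul_inv_rev, Matrix.mul_assoc B⁻¹, Matrix.nonsing_inv_mul _ hBt,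
    Matrix.mul_one, Matrix.mul_nonsing_inv _ hB, Matrix.one_mulVec]

lemma sq_div_max_mul_sq {c r : ℝ} (hc : 0 < c) (hr : 0 ≤ r) :
    (c / max c r) ^ 2 * r ^ 2 = min (r ^ 2) (c ^ 2) := by
  rcases le_total r c with h | h
  · rw [max_eq_left h, div_self hc.ne', one_pow, one_mul, min_eq_left (pow_le_pow_left₀ hr h 2)]
  · rw [max_eq_right h, div_pow, div_mul_cancel₀ _ (pow_ne_zero 2 (hc.trans_le h).ne'),
      min_eq_right (pow_le_pow_left₀ hc.le h 2)]

namespace EuclideanSpace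

variable {ι : Type*} [Fintype ι]

lemma sq_norm_mul_eq_sum (u : EuclideanSpace ℝ ι) (c : ℝ) : ‖u‖ ^ 2 * c = ∑ k, u k ^ 2 * c := by
  rw [← Finset.sum_mul, real_norm_sq_eq]

lemma dotProduct_self_eq_sq_norm (u : EuclideanSpace ℝ ι) : ⇑u ⬝ᵥ ⇑u = ‖u‖ ^ 2 := by
  rw [real_norm_sq_eq]
  simp only [dotProduct, sq]

lemma integral_radial_mul_coord_mul_coord_of_ne (f : ℝ → ℝ) {i j : ι} (hij : i ≠ j) :
    ∫ u : EuclideanSpace ℝ ι, f ‖u‖ * (u i * u j) = 0 := by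
  classical
  let R : EuclideanSpace ℝ ι ≃ₗᵢ[ℝ] EuclideanSpace ℝ ι :=
    LinearIsometryEquiv.piLpCongrRight 2 fun k =>
      if k = i then LinearIsometryEquiv.neg ℝ else LinearIsometryEquiv.refl ℝ ℝ
  have hR (u : EuclideanSpace ℝ ι) : f ‖R u‖ * (R u i * R u j) = -(f ‖u‖ * (u i * u j)) := by
    rw [R.norm_map]
    simp [R, hij.symm]
  have := integral_comp R fun u => f ‖u‖ * (u i * u j)
  simp only [hR, integral_neg] at this
  linarith

lemma integral_radial_mul_sq_coord_eq (f : ℝ → ℝ) (i j : ι) :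
    ∫ u : EuclideanSpace ℝ ι, f ‖u‖ * u i ^ 2 = ∫ u : EuclideanSpace ℝ ι, f ‖u‖ * u j ^ 2 := by
  classical
  let P := LinearIsometryEquiv.piLpCongrLeft 2 ℝ ℝ (Equiv.swap i j)
  have hP (u : EuclideanSpace ℝ ι) : f ‖P u‖ * P u j ^ 2 = f ‖u‖ * u i ^ 2 := by
    rw [P.norm_map]
    simp [P, LinearIsometryEquiv.piLpCongrLeft_apply]
  conv_rhs => rw [← integral_comp P]
  simp only [hP]

lemma integrable_radial_mul_coord_mul_coord {f : ℝ → ℝ}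
    (hf : Integrable fun u : EuclideanSpace ℝ ι => f ‖u‖ * ‖u‖ ^ 2) (k l : ι) :
    Integrable fun u : EuclideanSpace ℝ ι => f ‖u‖ * (u k * u l) := by
  have hbound (u : EuclideanSpace ℝ ι) : ‖u k * u l / ‖u‖ ^ 2‖ ≤ 1 := by
    rw [norm_div, norm_mul, norm_pow, norm_norm, sq]
    exact div_le_one_of_le₀ (mul_le_mul (PiLp.norm_apply_le u k) (PiLp.norm_apply_le u l)
      (norm_nonneg _) (norm_nonneg _)) (by positivity)
  refine (hf.bdd_mul (Measurable.aestronglyMeasurable (by fun_prop)) (ae_of_all _ hbound)).congr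
    (ae_of_all _ fun u => ?_)
  rcases eq_or_ne u 0 with rfl | hu
  · simp
  · field_simp

lemma integral_radial_mul_sq_coord {f : ℝ → ℝ}
    (hf : Integrable fun u : EuclideanSpace ℝ ι => f ‖u‖ * ‖u‖ ^ 2) (i : ι) :
    ∫ u : EuclideanSpace ℝ ι, f ‖u‖ * u i ^ 2
      = (∫ u : EuclideanSpace ℝ ι, f ‖u‖ * ‖u‖ ^ 2) / Fintype.card ι := by
  have : Nonempty ι := ⟨i⟩
  have hint (k : ι) : Integrable fun u : EuclideanSpace ℝ ι => f ‖u‖ * u k ^ 2 := by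
    simpa only [sq] using integrable_radial_mul_coord_mul_coord hf k k
  rw [eq_div_iff (Nat.cast_ne_zero.mpr Fintype.card_ne_zero)]
  calc (∫ u : EuclideanSpace ℝ ι, f ‖u‖ * u i ^ 2) * Fintype.card ι
      = ∑ k, ∫ u : EuclideanSpace ℝ ι, f ‖u‖ * u k ^ 2 := by
        rw [Finset.sum_congr rfl fun k _ => integral_radial_mul_sq_coord_eq f k i,
          Finset.sum_const, Finset.card_univ, nsmul_eq_mul, mul_comm]
    _ = ∫ u : EuclideanSpace ℝ ι, f ‖u‖ * ‖u‖ ^ 2 := by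
        simp_rw [← integral_finsetSum _ fun k _ => hint k, real_norm_sq_eq, Finset.mul_sum]

lemma integral_radial_mul_mulVec_mul_mulVec {m : Type*} (A : Matrix m ι ℝ) {f : ℝ → ℝ}
    (hf : Integrable fun u : EuclideanSpace ℝ ι => f ‖u‖ * ‖u‖ ^ 2) (i j : m) :
    ∫ u : EuclideanSpace ℝ ι, f ‖u‖ * ((A *ᵥ u) i * (A *ᵥ u) j)
      = (A * Aᵀ) i j * (∫ u : EuclideanSpace ℝ ι, f ‖u‖ * ‖u‖ ^ 2) / Fintype.card ι := by
  have hexpand (u : EuclideanSpace ℝ ι) : f ‖u‖ * ((A *ᵥ u) i * (A *ᵥ u) j)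
      = ∑ k, ∑ l, A i k * A j l * (f ‖u‖ * (u k * u l)) := by
    rw [Matrix.mulVec, Matrix.mulVec, dotProduct, dotProduct, Finset.sum_mul_sum, Finset.mul_sum]
    exact Finset.sum_congr rfl fun k _ => by
      rw [Finset.mul_sum]
      exact Finset.sum_congr rfl fun l _ => by ring
  have hint (k l : ι) := (integrable_radial_mul_coord_mul_coord hf k l).const_mul (A i k * A j l)
  simp_rw [hexpand]
  rw [integral_finsetSum _ fun k _ => integrable_finsetSum _ fun l _ => hint k l]
  simp_rw [integral_finsetSum _ fun l _ => hint _ l, integral_const_mul]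
  rw [Matrix.mul_apply, Finset.sum_mul, Finset.sum_div]
  refine Finset.sum_congr rfl fun k _ => ?_
  rw [Finset.sum_eq_single k (fun l _ hlk => by
    rw [integral_radial_mul_coord_mul_coord_of_ne f hlk.symm, mul_zero]) (by simp)]
  simp only [← sq, integral_radial_mul_sq_coord hf, Matrix.transpose_apply]
  ring

lemma integral_dotProduct_inv_mulVec_mul_coord_mul_coord [DecidableEq ι] {S : Matrix ι ι ℝ}
    (hS : S.PosDef) {h : ℝ → ℝ}
    (hh : Integrable fun u : EuclideanSpace ℝ ι => h (‖u‖ ^ 2) * ‖u‖ ^ 2) (i j : ι) :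
    ∫ x : EuclideanSpace ℝ ι, h (x ⬝ᵥ S⁻¹ *ᵥ x) * (x i * x j)
      = √S.det * S i j * (∫ u : EuclideanSpace ℝ ι, h (‖u‖ ^ 2) * ‖u‖ ^ 2) / Fintype.card ι := by
  obtain ⟨B, hB, rfl⟩ := hS.exists_isUnit_det_transpose_mul_self_eq
  have hdet : LinearMap.det (Matrix.toLpLin 2 2 Bᵀ) = B.det := by
    rw [LinearMap.det_toLpLin, Matrix.det_transpose]
  rw [integral_eq_abs_det_smul_integral_comp volume (hdet ▸ hB.ne_zero), hdet, smul_eq_mul]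
  simp only [Matrix.ofLp_toLpLin, Matrix.toLin'_apply,
    Matrix.transpose_mulVec_dotProduct_inv_mulVec hB, dotProduct_self_eq_sq_norm]
  rw [integral_radial_mul_mulVec_mul_mulVec Bᵀ (f := fun r => h (r ^ 2)) hh,
    Matrix.transpose_transpose, Matrix.det_mul, Matrix.det_transpose, sqrt_mul_self_eq_abs]
  ring

lemma integral_sq_coord_mul_exp_neg_sq_norm_div_two (i : ι) :
    ∫ u : EuclideanSpace ℝ ι, u i ^ 2 * exp (-‖u‖ ^ 2 / 2) = √(2 * π) ^ Fintype.card ι := by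
  classical
  have hprod (x : ι → ℝ) : x i ^ 2 * exp (-(∑ k, x k ^ 2) / 2)
      = ∏ k, (if k = i then x k ^ 2 else 1) * exp (-x k ^ 2 / 2) := by
    rw [Finset.prod_mul_distrib, Finset.prod_ite_eq' Finset.univ i, if_pos (Finset.mem_univ i),
      ← exp_sum, ← Finset.sum_div, Finset.sum_neg_distrib]
  have hfactor (k : ι) : ∫ t : ℝ, (if k = i then t ^ 2 else 1) * exp (-t ^ 2 / 2) = √(2 * π) := by
    split_ifs
    · exact integral_sq_mul_exp_neg_sq_div_two
    · simpa using integral_exp_neg_sq_div_two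
  rw [← (PiLp.volume_preserving_toLp ι).integral_comp
    (MeasurableEquiv.toLp 2 _).measurableEmbedding]
  simp only [real_norm_sq_eq, hprod]
  rw [integral_fintype_prod_volume_eq_prod
      (fun k t => (if k = i then t ^ 2 else 1) * exp (-t ^ 2 / 2)),
    Finset.prod_congr rfl fun k _ => hfactor k, Finset.prod_const, Finset.card_univ]

lemma integrable_sq_coord_mul_exp_neg_sq_norm_div_two (i : ι) :
    Integrable fun u : EuclideanSpace ℝ ι => u i ^ 2 * exp (-‖u‖ ^ 2 / 2) :=
  .of_integral_ne_zero (by rw [integral_sq_coord_mul_exp_neg_sq_norm_div_two]; positivity)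

lemma integrable_sq_norm_mul_exp_neg_sq_norm_div_two :
    Integrable fun u : EuclideanSpace ℝ ι => ‖u‖ ^ 2 * exp (-‖u‖ ^ 2 / 2) := by
  simp_rw [sq_norm_mul_eq_sum]
  exact integrable_finsetSum _ fun k _ => integrable_sq_coord_mul_exp_neg_sq_norm_div_two k

lemma integral_sq_norm_mul_exp_neg_sq_norm_div_two :
    ∫ u : EuclideanSpace ℝ ι, ‖u‖ ^ 2 * exp (-‖u‖ ^ 2 / 2)
      = Fintype.card ι * √(2 * π) ^ Fintype.card ι := by
  simp_rw [sq_norm_mul_eq_sum]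
  rw [integral_finsetSum _ fun k _ => integrable_sq_coord_mul_exp_neg_sq_norm_div_two k]
  simp [integral_sq_coord_mul_exp_neg_sq_norm_div_two]

lemma integrable_min_sq_norm_mul_exp (R : ℝ) :
    Integrable fun u : EuclideanSpace ℝ ι => min (‖u‖ ^ 2) (R ^ 2) * exp (-‖u‖ ^ 2 / 2) := by
  refine integrable_sq_norm_mul_exp_neg_sq_norm_div_two.mono'
    (Continuous.aestronglyMeasurable (by fun_prop)) (ae_of_all _ fun u => ?_)
  rw [norm_of_nonneg (by positivity)]
  exact mul_le_mul_of_nonneg_right (min_le_left _ _) (exp_nonneg _)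

lemma integral_min_sq_norm_mul_exp_le (R : ℝ) :
    ∫ u : EuclideanSpace ℝ ι, min (‖u‖ ^ 2) (R ^ 2) * exp (-‖u‖ ^ 2 / 2)
      ≤ Fintype.card ι * √(2 * π) ^ Fintype.card ι := by
  rw [← integral_sq_norm_mul_exp_neg_sq_norm_div_two]
  exact integral_mono (integrable_min_sq_norm_mul_exp R)
    integrable_sq_norm_mul_exp_neg_sq_norm_div_two
    fun u => mul_le_mul_of_nonneg_right (min_le_left _ _) (exp_nonneg _)

lemma integral_min_sq_norm_mul_exp_pos [Nonempty ι] {R : ℝ} (hR : R ≠ 0) :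
    0 < ∫ u : EuclideanSpace ℝ ι, min (‖u‖ ^ 2) (R ^ 2) * exp (-‖u‖ ^ 2 / 2) := by
  rw [integral_pos_iff_support_of_nonneg (fun u => by positivity)
    (integrable_min_sq_norm_mul_exp R)]
  have hsupp : {0}ᶜ ⊆ Function.support
      fun u : EuclideanSpace ℝ ι => min (‖u‖ ^ 2) (R ^ 2) * exp (-‖u‖ ^ 2 / 2) := fun u hu =>
    (mul_pos (lt_min (pow_pos (norm_pos_iff.2 hu) 2) (by positivity)) (exp_pos _)).ne'
  obtain ⟨u, hu⟩ := exists_ne (0 : EuclideanSpace ℝ ι)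
  exact (isOpen_compl_singleton.measure_pos volume ⟨u, hu⟩).trans_le (measure_mono hsupp)

variable (ι) in
/-- The factor `ρ̄ = E[min (‖Z‖², R²)] / d` for `Z` a standard Gaussian vector in `ℝ^ι`. -/
noncomputable def clippedGaussianFactor (R : ℝ) : ℝ :=
  (∫ u : EuclideanSpace ℝ ι, min (‖u‖ ^ 2) (R ^ 2) * exp (-‖u‖ ^ 2 / 2))
    / (Fintype.card ι * √(2 * π) ^ Fintype.card ι)

lemma clippedGaussianFactor_pos [Nonempty ι] {R : ℝ} (hR : R ≠ 0) :
    0 < clippedGaussianFactor ι R := by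
  have := integral_min_sq_norm_mul_exp_pos (ι := ι) hR
  unfold clippedGaussianFactor
  positivity

lemma clippedGaussianFactor_le_one (R : ℝ) : clippedGaussianFactor ι R ≤ 1 :=
  div_le_one_of_le₀ (integral_min_sq_norm_mul_exp_le R) (by positivity)

end EuclideanSpace

/-- Expectation of the outer product of the clipped Gaussian `N(0, S)`:
`E[clip(X) clip(X)ᵀ] = ρ̄ S` with
`ρ̄ = (1/(d(2π)^{d/2})) ∫ min(‖u‖², R_c²) e^{-‖u‖²/2} du`, and `0 < ρ̄ ≤ 1`. -/
theorem clipped_gaussian_covariance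
    {d : ℕ} (hd : 0 < d) (S : Matrix (Fin d) (Fin d) ℝ)
    (hS : S.PosDef) (Rc : ℝ) (hRc : 0 < Rc) :
    let p : EuclideanSpace ℝ (Fin d) → ℝ := fun x =>
      ((2 * Real.pi) ^ ((d : ℝ) / 2) * Real.sqrt S.det)⁻¹ *
        Real.exp (-(x ⬝ᵥ S⁻¹.mulVec x) / 2)
    let clip : EuclideanSpace ℝ (Fin d) → EuclideanSpace ℝ (Fin d) := fun x =>
      (Rc / max Rc (Real.sqrt (x ⬝ᵥ S⁻¹.mulVec x))) • x
    let ρbar : ℝ :=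
      (1 / ((d : ℝ) * (2 * Real.pi) ^ ((d : ℝ) / 2))) *
        ∫ u : EuclideanSpace ℝ (Fin d), min (‖u‖ ^ 2) (Rc ^ 2) * Real.exp (-‖u‖ ^ 2 / 2)
    (∀ i j : Fin d, (∫ x : EuclideanSpace ℝ (Fin d), p x * (clip x i * clip x j)) =
        ρbar * S i j) ∧ 0 < ρbar ∧ ρbar ≤ 1 := by
  intro p clip ρbar
  have hpow : (2 * π) ^ ((d : ℝ) / 2) = √(2 * π) ^ d := by
    rw [rpow_div_two_eq_sqrt _ (by positivity), rpow_natCast]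
  have hρ : ρbar = EuclideanSpace.clippedGaussianFactor (Fin d) Rc := by
    simp only [ρbar, EuclideanSpace.clippedGaussianFactor, hpow, Fintype.card_fin,
      one_div_mul_eq_div]
  refine ⟨fun i j => ?_, ?_, hρ ▸ EuclideanSpace.clippedGaussianFactor_le_one Rc⟩
  · let h : ℝ → ℝ := fun r => exp (-r / 2) * (Rc / max Rc √r) ^ 2
    have hclip : (fun x => p x * (clip x i * clip x j))
        = fun x : EuclideanSpace ℝ (Fin d) =>
          ((2 * π) ^ ((d : ℝ) / 2) * √S.det)⁻¹ * (h (x ⬝ᵥ S⁻¹ *ᵥ x) * (x i * x j)) := by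
      funext x
      simp only [p, clip, h, PiLp.smul_apply, smul_eq_mul]
      ring
    have hradial : (fun u : EuclideanSpace ℝ (Fin d) => h (‖u‖ ^ 2) * ‖u‖ ^ 2)
        = fun u => min (‖u‖ ^ 2) (Rc ^ 2) * exp (-‖u‖ ^ 2 / 2) := by
      funext u
      rw [← sq_div_max_mul_sq hRc (norm_nonneg u)]
      simp only [h, sqrt_sq (norm_nonneg u)]
      ring
    have hdet : √S.det ≠ 0 := (sqrt_pos.mpr hS.det_pos).ne'
    rw [hclip, integral_const_mul,
      EuclideanSpace.integral_dotProduct_inv_mulVec_mul_coord_mul_coord hS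
        (hradial ▸ EuclideanSpace.integrable_min_sq_norm_mul_exp Rc),
      hradial, hρ, EuclideanSpace.clippedGaussianFactor, Fintype.card_fin, hpow]
    field_simp
  · have : Nonempty (Fin d) := ⟨⟨0, hd⟩⟩
    exact hρ ▸ EuclideanSpace.clippedGaussianFactor_pos hRc.ne'
end

section
/- (Relative sensitivity via relative smoothness) Let f₀ be L-smooth and convex with f₀ relatively smooth with constant L_rel with respect to a μ-strongly convex function f whose minimizer θ⋆ has ∇f(θ⋆) = 0. Then for all θ: ‖∇f₀(θ) − ∇f₀(θ⋆)‖² ≤ (L·L_rel/μ)‖∇f(θ)‖². -/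
open scoped RealInnerProductSpace

/-- Relative sensitivity via relative smoothness: if `f₀` is `L`-smooth and convex
(expressed via the Bregman-divergence inequality), `f₀` is `L_rel`-relatively smooth
w.r.t. a `μ`-strongly convex `f` whose gradient vanishes at the reference point `θ⋆`,
then `‖∇f₀(θ) - ∇f₀(θ⋆)‖² ≤ (L L_rel / μ) ‖∇f(θ)‖²`. -/
theorem relative_sensitivity_via_relative_smoothness
    {d : ℕ} (f f₀ : EuclideanSpace ℝ (Fin d) → ℝ)
    (g g₀ : EuclideanSpace ℝ (Fin d) → EuclideanSpace ℝ (Fin d))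
    (θstar : EuclideanSpace ℝ (Fin d)) (L Lrel μ : ℝ)
    (hL : 0 ≤ L) (hLrel : 0 ≤ Lrel) (hμ : 0 < μ)
    (hgrad : ∀ θ, HasGradientAt f (g θ) θ)
    (hgrad₀ : ∀ θ, HasGradientAt f₀ (g₀ θ) θ)
    (hgrad0 : g θstar = 0)
    (hsmooth : ∀ θ, ‖g₀ θ - g₀ θstar‖ ^ 2 ≤
      2 * L * (f₀ θ - f₀ θstar - ⟪g₀ θstar, θ - θstar⟫))
    (hrel : ∀ θ, f₀ θ - f₀ θstar - ⟪g₀ θstar, θ - θstar⟫ ≤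
      Lrel * (f θ - f θstar - ⟪g θstar, θ - θstar⟫))
    (hstrong : ∀ θ θ', μ / 2 * ‖θ - θ'‖ ^ 2 ≤ f θ - f θ' - ⟪g θ', θ - θ'⟫) :
    ∀ θ, ‖g₀ θ - g₀ θstar‖ ^ 2 ≤ L * Lrel / μ * ‖g θ‖ ^ 2 := by
  intro θ
  have hz : ⟪g θstar, θ - θstar⟫ = 0 := by rw [hgrad0]; simp
  have h1 := hsmooth θ
  have h2 := hrel θ
  have h3 := hstrong θstar θ
  have hi : ⟪g θ, θstar - θ⟫ = -⟪g θ, θ - θstar⟫ := by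
    rw [← inner_neg_right]; congr 1; abel
  have hn : ‖θstar - θ‖ = ‖θ - θstar‖ := norm_sub_rev _ _
  have hcs : ⟪g θ, θ - θstar⟫ ≤ ‖g θ‖ * ‖θ - θstar‖ := real_inner_le_norm _ _
  rw [hi, hn] at h3
  have h4 : 2 * μ * (f θ - f θstar) ≤ ‖g θ‖ ^ 2 := by
    nlinarith [sq_nonneg (‖g θ‖ - μ * ‖θ - θstar‖), norm_nonneg (g θ),
      norm_nonneg (θ - θstar), hμ.le]
  have hDf : f θ - f θstar ≤ ‖g θ‖ ^ 2 / (2 * μ) := by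
    rw [le_div_iff₀ (by positivity)]; linarith
  rw [hz] at h2
  have key : ‖g₀ θ - g₀ θstar‖ ^ 2 ≤ 2 * L * Lrel * (‖g θ‖ ^ 2 / (2 * μ)) := by
    nlinarith [mul_nonneg hL hLrel]
  calc ‖g₀ θ - g₀ θstar‖ ^ 2 ≤ 2 * L * Lrel * (‖g θ‖ ^ 2 / (2 * μ)) := key
    _ = L * Lrel / μ * ‖g θ‖ ^ 2 := by field_simp
end

section
/- (Gaussian smooth sensitivity correspondence) Let g(x) = log(γ‖R(x)‖² + σ²). If R satisfies (η, R_rel)-relative L2 sensitivity and σ² ≥ γ(1+η⁻¹)/(2η+η²)·R_rel², then for all neighboring x ~ y: |g(x) − g(y)| ≤ 2η, and with σ² = γη⁻²R_rel²: ‖R(x) − R(y)‖² ≤ (η²/γ)·e^{g(x)}. -/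
lemma gssc_side (η Rrel γ σ2 a b dd : ℝ) (hη : 0 < η) (hγ : 0 < γ) (hσ : 0 < σ2)
    (hσ2 : γ * (1 + η⁻¹) / (2 * η + η ^ 2) * Rrel ^ 2 ≤ σ2)
    (ha : 0 ≤ a) (hb : 0 ≤ b) (hd : 0 ≤ dd)
    (htri : a ≤ b + dd) (hs : dd ^ 2 ≤ η ^ 2 * b ^ 2 + Rrel ^ 2) :
    Real.log (γ * a ^ 2 + σ2) - Real.log (γ * b ^ 2 + σ2) ≤ 2 * η := by
  have hb' : (0:ℝ) < γ * b ^ 2 + σ2 := by positivity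
  have ha' : (0:ℝ) < γ * a ^ 2 + σ2 := by positivity
  have hinv : η * η⁻¹ = 1 := mul_inv_cancel₀ hη.ne'
  have hden : (0:ℝ) < 2 * η + η ^ 2 := by nlinarith
  have h3 : (b + dd) ^ 2 ≤ (1 + η) * b ^ 2 + (1 + η⁻¹) * dd ^ 2 := by
    have h3' : η * ((b + dd) ^ 2) ≤ η * ((1 + η) * b ^ 2 + (1 + η⁻¹) * dd ^ 2) := by
      nlinarith [sq_nonneg (η * b - dd)]
    exact le_of_mul_le_mul_left h3' hη
  have h1 : a ^ 2 ≤ (1 + η) ^ 2 * b ^ 2 + (1 + η⁻¹) * Rrel ^ 2 := by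
    have h2 : a ^ 2 ≤ (b + dd) ^ 2 := by nlinarith
    have hinvpos : (0:ℝ) ≤ 1 + η⁻¹ := by positivity
    nlinarith [mul_le_mul_of_nonneg_left hs hinvpos]
  have hRb : γ * (1 + η⁻¹) * Rrel ^ 2 ≤ (2 * η + η ^ 2) * σ2 := by
    rw [div_mul_eq_mul_div, div_le_iff₀ hden] at hσ2
    nlinarith [hσ2]
  have key : γ * a ^ 2 + σ2 ≤ (1 + η) ^ 2 * (γ * b ^ 2 + σ2) := by
    nlinarith [mul_le_mul_of_nonneg_left h1 hγ.le]
  have hlog1 : Real.log (γ * a ^ 2 + σ2) ≤ Real.log ((1 + η) ^ 2 * (γ * b ^ 2 + σ2)) :=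
    Real.log_le_log ha' key
  have h1η : (0:ℝ) < 1 + η := by linarith
  have hlog2 : Real.log ((1 + η) ^ 2 * (γ * b ^ 2 + σ2))
      = 2 * Real.log (1 + η) + Real.log (γ * b ^ 2 + σ2) := by
    rw [Real.log_mul (by positivity) hb'.ne', Real.log_pow]
    push_cast; ring
  have hlog3 : Real.log (1 + η) ≤ η := by
    have := Real.log_le_sub_one_of_pos h1η
    linarith
  linarith [hlog1, hlog3, hlog2.le, hlog2.ge]

/-- Gaussian smooth sensitivity correspondence for the Relative Gaussian Mechanism. -/
theorem gaussian_smooth_sensitivity_correspondence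
    {D : Type*} {d : ℕ} (R : D → EuclideanSpace ℝ (Fin d))
    (neighbor : D → D → Prop) (hsymm : ∀ x y, neighbor x y → neighbor y x)
    (η Rrel γ : ℝ) (hη : 0 < η) (hRrel : 0 ≤ Rrel) (hγ : 0 < γ)
    (hsens : ∀ x y, neighbor x y →
      ‖R x - R y‖ ^ 2 ≤ η ^ 2 * ‖R x‖ ^ 2 + Rrel ^ 2) :
    (∀ σ2 : ℝ, 0 < σ2 → σ2 ≥ γ * (1 + η⁻¹) / (2 * η + η ^ 2) * Rrel ^ 2 →
      ∀ x y, neighbor x y →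
        |Real.log (γ * ‖R x‖ ^ 2 + σ2) - Real.log (γ * ‖R y‖ ^ 2 + σ2)| ≤ 2 * η) ∧
    (∀ x y, neighbor x y →
      ‖R x - R y‖ ^ 2 ≤ η ^ 2 / γ *
        Real.exp (Real.log (γ * ‖R x‖ ^ 2 + γ * η⁻¹ ^ 2 * Rrel ^ 2))) := by
  constructor
  · intro σ2 hσ hσ2 x y hxy
    rw [abs_le]
    constructor
    · have := gssc_side η Rrel γ σ2 ‖R y‖ ‖R x‖ ‖R y - R x‖ hη hγ hσ hσ2
        (norm_nonneg _) (norm_nonneg _) (norm_nonneg _)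
        (by linarith [norm_sub_norm_le (R y) (R x)])
        (by rw [norm_sub_rev]; exact hsens x y hxy)
      linarith
    · have := gssc_side η Rrel γ σ2 ‖R x‖ ‖R y‖ ‖R x - R y‖ hη hγ hσ hσ2
        (norm_nonneg _) (norm_nonneg _) (norm_nonneg _)
        (by linarith [norm_sub_norm_le (R x) (R y)])
        (by rw [norm_sub_rev]; exact hsens y x (hsymm x y hxy))
      linarith
  · intro x y hxy
    have hle : (γ * ‖R x‖ ^ 2 + γ * η⁻¹ ^ 2 * Rrel ^ 2)
        ≤ Real.exp (Real.log (γ * ‖R x‖ ^ 2 + γ * η⁻¹ ^ 2 * Rrel ^ 2)) := by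
      rcases lt_or_ge 0 (γ * ‖R x‖ ^ 2 + γ * η⁻¹ ^ 2 * Rrel ^ 2) with h | h
      · exact (Real.exp_log h).ge
      · exact h.trans (Real.exp_pos _).le
    have hinv : η * η⁻¹ = 1 := mul_inv_cancel₀ hη.ne'
    have heq : η ^ 2 / γ * (γ * ‖R x‖ ^ 2 + γ * η⁻¹ ^ 2 * Rrel ^ 2)
        = η ^ 2 * ‖R x‖ ^ 2 + Rrel ^ 2 := by
      field_simp
    calc ‖R x - R y‖ ^ 2 ≤ η ^ 2 * ‖R x‖ ^ 2 + Rrel ^ 2 := hsens x y hxy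
      _ = η ^ 2 / γ * (γ * ‖R x‖ ^ 2 + γ * η⁻¹ ^ 2 * Rrel ^ 2) := heq.symm
      _ ≤ _ := by
          apply mul_le_mul_of_nonneg_left hle (by positivity)
end
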